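/- arXiv:math/0502019 — 2 statements merged into one kernel-verified Lean document; each statement's English description precedes it below -/
import Mathlib

section
/- Let q be a real number with 0 < q < 1, let r ≥ 1 be an integer, let w₁,…,w_r > 0 be reals, let f be a positive integer and χ a complex Dirichlet character modulo f. Then for all integers n ≥ r, the generalized multiple Changhee q-Bernoulli numbers satisfy the distribution relation B^{(r)}_{n,χ}(q | w₁,…,w_r) = [f]_q^{n−r} · Σ_{a₁,…,a_r = 1}^{f} (Π_{i=1}^{r} χ(a_i)) · B^{(r)}_n( (w₁a₁+…+w_ra_r)/f : q^f | w₁,…,w_r ), where on the right the polynomial is formed with q replaced by q^f. -/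
open Finset

/-- The q-analogue `[z]_q = (1 - q^z)/(1 - q)` for a real exponent `z`. -/
noncomputable def qn (q z : ℝ) : ℝ := (1 - q ^ z) / (1 - q)

/-- The Barnes-type multiple Changhee q-Bernoulli polynomial (for `n ≥ r ≥ 1`):
`B^{(r)}_n(w:q|w₁,…,w_r) = (-1)^r·(Π wᵢ)·(n!/(n-r)!)·Σ_{ν} q^{w+Σ wᵢνᵢ}·[w+Σ wᵢνᵢ]_q^{n-r}`. -/
noncomputable def multB (q : ℝ) (r : ℕ) (w : ℝ) (ws : Fin r → ℝ) (n : ℕ) : ℝ :=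
  (-1) ^ r * (∏ i, ws i) * ((n.factorial : ℝ) / ((n - r).factorial : ℝ)) *
    ∑' ν : Fin r → ℕ, q ^ (w + ∑ i, ws i * (ν i : ℝ))
      * qn q (w + ∑ i, ws i * (ν i : ℝ)) ^ (n - r)

/-- The generalized multiple Changhee q-Bernoulli number attached to `χ`:
`B^{(r)}_{n,χ}(q|w₁,…,w_r) = (-1)^r·(Π wⱼ)·(n!/(n-r)!)·
  Σ_{n₁,…,n_r ≥ 1} (Π χ(n_k))·q^{Σ w_m n_m}·[Σ w_m n_m]_q^{n-r}`. -/
noncomputable def genMultB (q : ℝ) (r : ℕ) (ws : Fin r → ℝ) {f : ℕ}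
    (χ : DirichletCharacter ℂ f) (n : ℕ) : ℂ :=
  (-1) ^ r * ((∏ j, ws j : ℝ) : ℂ) * (((n.factorial : ℝ) / ((n - r).factorial : ℝ) : ℝ) : ℂ) *
    ∑' ν : Fin r → ℕ, (∏ k, χ ((ν k + 1 : ℕ) : ZMod f))
      * ((q ^ (∑ m, ws m * ((ν m : ℝ) + 1)) : ℝ) : ℂ)
      * ((qn q (∑ m, ws m * ((ν m : ℝ) + 1)) ^ (n - r) : ℝ) : ℂ)

/-!
Split every index `ν_k ≥ 1` as `ν_k = a_k + f m_k` with `1 ≤ a_k ≤ f` and `m_k ≥ 0`. The character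
only sees `a_k`, and `∑ w_k ν_k = f x` with `x = (∑ w_k a_k)/f + ∑ w_k m_k`, where
`q^{f x} = (q^f)^x` and `[f x]_q = [f]_q [x]_{q^f}`. The series converges absolutely (it is dominated
by a product of geometric series), so it may be regrouped by the residues `a`; the inner series
over `m` is then the Barnes polynomial at `q^f` evaluated at `(∑ w_k a_k)/f`.
-/

theorem qn_nonneg {q t : ℝ} (hq0 : 0 ≤ q) (hq1 : q < 1) (ht : 0 ≤ t) : 0 ≤ qn q t :=
  div_nonneg (sub_nonneg.2 (Real.rpow_le_one hq0 hq1.le ht)) (sub_pos.2 hq1).le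

theorem qn_le_inv_one_sub {q t : ℝ} (hq0 : 0 ≤ q) (hq1 : q < 1) : qn q t ≤ (1 - q)⁻¹ := by
  rw [qn, div_eq_mul_inv]
  exact mul_le_of_le_one_left (inv_nonneg.2 (sub_pos.2 hq1).le)
    (sub_le_self _ (Real.rpow_nonneg hq0 t))

theorem qn_natCast_mul {q : ℝ} (hq0 : 0 ≤ q) (hq1 : q ≠ 1) (f : ℕ) (x : ℝ) :
    qn q (f * x) = qn q f * qn (q ^ f) x := by
  rcases Nat.eq_zero_or_pos f with rfl | hf
  · simp [qn]
  have h1 : 1 - q ≠ 0 := sub_ne_zero.2 hq1.symm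
  have h2 : 1 - q ^ f ≠ 0 :=
    sub_ne_zero.2 fun h => hq1 ((pow_eq_one_iff_of_nonneg hq0 hf.ne').1 h.symm)
  rw [qn, qn, qn, Real.rpow_natCast_mul hq0, Real.rpow_natCast]
  field_simp

theorem rpow_mul_qn_pow_natCast_mul {q : ℝ} (hq0 : 0 ≤ q) (hq1 : q ≠ 1) (f : ℕ) (x : ℝ)
    (k : ℕ) :
    q ^ ((f : ℝ) * x) * qn q (f * x) ^ k = qn q f ^ k * ((q ^ f) ^ x * qn (q ^ f) x ^ k) := by
  rw [Real.rpow_natCast_mul hq0, qn_natCast_mul hq0 hq1, mul_pow]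
  ring

theorem summable_prod_pow {ι : Type*} [Fintype ι] {c : ι → ℝ}
    (hc0 : ∀ i, 0 ≤ c i) (hc1 : ∀ i, c i < 1) :
    Summable fun ν : ι → ℕ => ∏ i, c i ^ ν i := by
  classical
  refine summable_of_sum_le (c := ∏ i, (1 - c i)⁻¹)
    (fun ν => prod_nonneg fun i _ => pow_nonneg (hc0 i) _) fun u => ?_
  calc ∑ ν ∈ u, ∏ i, c i ^ ν i
      ≤ ∑ ν ∈ Fintype.piFinset fun i => u.image (· i), ∏ i, c i ^ ν i :=
        sum_le_sum_of_subset_of_nonneg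
          (fun ν hν => Fintype.mem_piFinset.2 fun i => mem_image_of_mem _ hν)
          fun ν _ _ => prod_nonneg fun i _ => pow_nonneg (hc0 i) _
    _ = ∏ i, ∑ k ∈ u.image (· i), c i ^ k := (prod_univ_sum _ _).symm
    _ ≤ ∏ i, (1 - c i)⁻¹ := by
        refine prod_le_prod (fun i _ => sum_nonneg fun k _ => pow_nonneg (hc0 i) k) fun i _ => ?_
        rw [← tsum_geometric_of_lt_one (hc0 i) (hc1 i)]
        exact (summable_geometric_of_lt_one (hc0 i) (hc1 i)).sum_le_tsum _
          fun k _ => pow_nonneg (hc0 i) k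

theorem summable_rpow_sum_mul {ι : Type*} [Fintype ι] {q : ℝ} (hq0 : 0 < q) (hq1 : q < 1)
    {ws : ι → ℝ} (hws : ∀ i, 0 < ws i) :
    Summable fun ν : ι → ℕ => q ^ (∑ i, ws i * (ν i : ℝ)) := by
  refine (summable_prod_pow (fun i => Real.rpow_nonneg hq0.le (ws i))
    fun i => Real.rpow_lt_one hq0.le hq1 (hws i)).congr fun ν => ?_
  rw [Real.rpow_sum_of_pos hq0]
  exact prod_congr rfl fun i _ => by rw [Real.rpow_mul hq0.le, Real.rpow_natCast]

theorem summable_genMultB_term {ι : Type*} [Fintype ι] {q : ℝ} (hq0 : 0 < q) (hq1 : q < 1)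
    {ws : ι → ℝ} (hws : ∀ i, 0 < ws i) {f : ℕ} (χ : DirichletCharacter ℂ f) (k : ℕ) :
    Summable fun ν : ι → ℕ => (∏ i, χ ((ν i + 1 : ℕ) : ZMod f))
      * ((q ^ (∑ i, ws i * ((ν i : ℝ) + 1)) : ℝ) : ℂ)
      * ((qn q (∑ i, ws i * ((ν i : ℝ) + 1)) ^ k : ℝ) : ℂ) := by
  refine Summable.of_norm_bounded
    ((summable_rpow_sum_mul hq0 hq1 hws).mul_right ((1 - q)⁻¹ ^ k)) fun ν => ?_
  have hexp : 0 ≤ ∑ i, ws i * ((ν i : ℝ) + 1) :=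
    sum_nonneg fun i _ => mul_nonneg (hws i).le (by positivity)
  have hχ : ‖∏ i, χ ((ν i + 1 : ℕ) : ZMod f)‖ ≤ 1 := by
    rw [norm_prod]
    exact prod_le_one (fun _ _ => norm_nonneg _) fun i _ => χ.norm_le_one _
  have hpow : q ^ (∑ i, ws i * ((ν i : ℝ) + 1)) ≤ q ^ (∑ i, ws i * (ν i : ℝ)) :=
    Real.rpow_le_rpow_of_exponent_ge hq0 hq1.le
      (sum_le_sum fun i _ => mul_le_mul_of_nonneg_left (by linarith) (hws i).le)
  have hqn : qn q (∑ i, ws i * ((ν i : ℝ) + 1)) ^ k ≤ (1 - q)⁻¹ ^ k :=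
    pow_le_pow_left₀ (qn_nonneg hq0.le hq1 hexp) (qn_le_inv_one_sub hq0.le hq1) k
  have hqn_nonneg := pow_nonneg (qn_nonneg hq0.le hq1 hexp) k
  rw [norm_mul, norm_mul, Complex.norm_real, Complex.norm_real,
    Real.norm_of_nonneg (Real.rpow_nonneg hq0.le _), Real.norm_of_nonneg hqn_nonneg]
  calc _ ≤ 1 * q ^ (∑ i, ws i * (ν i : ℝ)) * (1 - q)⁻¹ ^ k :=
        mul_le_mul (mul_le_mul hχ hpow (Real.rpow_nonneg hq0.le _) zero_le_one) hqn hqn_nonneg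
          (by positivity)
    _ = _ := by rw [one_mul]

def piNatDivModEquiv (ι : Type*) {f : ℕ} (hf : 0 < f) : (ι → Fin f) × (ι → ℕ) ≃ (ι → ℕ) where
  toFun p i := p.1 i + f * p.2 i
  invFun ν := (fun i => ⟨ν i % f, Nat.mod_lt _ hf⟩, fun i => ν i / f)
  left_inv p := by
    refine Prod.ext (funext fun i => Fin.ext ?_) (funext fun i => ?_)
    · simp [Nat.mod_eq_of_lt (p.1 i).isLt]
    · simp [Nat.add_mul_div_left _ _ hf, Nat.div_eq_of_lt (p.1 i).isLt]
  right_inv ν := funext fun i => Nat.mod_add_div _ _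

theorem tsum_eq_sum_tsum_add_mul {ι α : Type*} [Fintype ι] [DecidableEq ι] [AddCommGroup α]
    [UniformSpace α] [IsUniformAddGroup α] [CompleteSpace α] [T0Space α] {f : ℕ} (hf : 0 < f)
    {g : (ι → ℕ) → α} (hg : Summable g) :
    ∑' ν, g ν = ∑ a : ι → Fin f, ∑' m : ι → ℕ, g fun i => a i + f * m i := by
  have hgE : Summable fun p => g (piNatDivModEquiv ι hf p) :=
    (piNatDivModEquiv ι hf).summable_iff.2 hg
  rw [← (piNatDivModEquiv ι hf).tsum_eq g, hgE.tsum_prod, tsum_fintype]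
  rfl

theorem natCast_add_mul_add_one_zmod (a m f : ℕ) :
    ((a + f * m + 1 : ℕ) : ZMod f) = ((a + 1 : ℕ) : ZMod f) := by
  simp

theorem sum_mul_add_mul_add_one {ι : Type*} [Fintype ι] (ws : ι → ℝ) {f : ℕ} (hf : (f : ℝ) ≠ 0)
    (a m : ι → ℕ) :
    ∑ i, ws i * (((a i + f * m i : ℕ) : ℝ) + 1)
      = f * ((∑ i, ws i * ((a i : ℝ) + 1)) / f + ∑ i, ws i * (m i : ℝ)) := by
  rw [mul_add, mul_div_cancel₀ _ hf, mul_sum, ← sum_add_distrib]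
  exact sum_congr rfl fun i _ => by push_cast; ring

theorem genMultB_distribution_general (q : ℝ) (hq0 : 0 < q) (hq1 : q < 1)
    (r : ℕ) (ws : Fin r → ℝ) (hws : ∀ i, 0 < ws i)
    (f : ℕ) (hf : 0 < f) (χ : DirichletCharacter ℂ f)
    (n : ℕ) :
    genMultB q r ws χ n
      = ((qn q (f : ℝ) ^ (n - r) : ℝ) : ℂ)
        * ∑ a : Fin r → Fin f, (∏ i, χ (((a i : ℕ) + 1 : ℕ) : ZMod f))
          * ((multB (q ^ f) r ((∑ i, ws i * (((a i : ℕ) : ℝ) + 1)) / (f : ℝ)) ws n : ℝ) : ℂ) := by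
  have hf0 : (f : ℝ) ≠ 0 := Nat.cast_ne_zero.2 hf.ne'
  rw [genMultB, tsum_eq_sum_tsum_add_mul hf (summable_genMultB_term hq0 hq1 hws χ (n - r)),
    mul_sum, mul_sum]
  refine sum_congr rfl fun a _ => ?_
  simp only [natCast_add_mul_add_one_zmod, sum_mul_add_mul_add_one ws hf0, mul_assoc,
    ← Complex.ofReal_mul, rpow_mul_qn_pow_natCast_mul hq0.le hq1.ne, multB]
  push_cast
  rw [tsum_mul_left, tsum_mul_left]
  ring

/-- Distribution relation for the generalized multiple Changhee q-Bernoulli numbers: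
`B^{(r)}_{n,χ}(q|w₁,…,w_r) = [f]_q^{n-r}·Σ_{a₁,…,a_r=1}^{f} (Π χ(aᵢ))·
  B^{(r)}_n((w₁a₁+…+w_ra_r)/f : q^f | w₁,…,w_r)`. -/
theorem genMultB_distribution (q : ℝ) (hq0 : 0 < q) (hq1 : q < 1)
    (r : ℕ) (hr : 1 ≤ r) (ws : Fin r → ℝ) (hws : ∀ i, 0 < ws i)
    (f : ℕ) (hf : 0 < f) (χ : DirichletCharacter ℂ f)
    (n : ℕ) (hn : r ≤ n) :
    genMultB q r ws χ n
      = ((qn q (f : ℝ) ^ (n - r) : ℝ) : ℂ)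
        * ∑ a : Fin r → Fin f, (∏ i, χ (((a i : ℕ) + 1 : ℕ) : ZMod f))
          * ((multB (q ^ f) r ((∑ i, ws i * (((a i : ℕ) : ℝ) + 1)) / (f : ℝ)) ws n : ℝ) : ℂ) :=
  genMultB_distribution_general q hq0 hq1 r ws hws f hf χ n
end

section
/- Let q be a real number with 0 < q < 1, let w₁ > 0 and w ≥ 0 be reals, and let u be a complex number with |u| < 1, u ≠ 1. Then for every integer n ≥ 0, the Euler–Barnes type Daehee q-zeta function satisfies ζ_q(−n, w, u | w₁) = (1/(1−u)) · H_n(u^{−1}, w : q | w₁), i.e. Σ_{m=0}^{∞} u^m · [w + w₁m]_q^{n} = (1/(1−u)) · Σ_{l=0}^{n} C(n,l) · [w]_q^{n−l} · q^{w·l} · (1−u)·(1−q)^{−l} · Σ_{j=0}^{l} C(l,j)·(−1)^j / (1 − q^{w₁j}·u). -/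
open Finset

/-- The Euler–Barnes type Daehee q-Euler number
`H_l(u⁻¹:q|w₁) = (1-u)·(1-q)^{-l}·Σ_{j=0}^{l} C(l,j)·(-1)^j/(1 - q^{w₁j}·u)`. -/
noncomputable def Hnum (q w1 : ℝ) (u : ℂ) (l : ℕ) : ℂ :=
  (1 - u) * (((1 - q : ℝ) : ℂ)⁻¹) ^ l *
    ∑ j ∈ range (l + 1), (l.choose j : ℂ) * (-1) ^ j
      / (1 - ((q ^ (w1 * (j : ℝ)) : ℝ) : ℂ) * u)

/-- The Euler–Barnes type Daehee q-Euler polynomial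
`H_n(u⁻¹,w:q|w₁) = Σ_{l=0}^{n} C(n,l)·[w]_q^{n-l}·q^{w·l}·H_l(u⁻¹:q|w₁)`. -/
noncomputable def Hpoly (q w w1 : ℝ) (u : ℂ) (n : ℕ) : ℂ :=
  ∑ l ∈ range (n + 1), (n.choose l : ℂ) * ((qn q w ^ (n - l) : ℝ) : ℂ)
    * ((q ^ (w * (l : ℝ)) : ℝ) : ℂ) * Hnum q w1 u l

/-! Since `[a + b]_q = [a]_q + q^a [b]_q`, the binomial theorem reduces `ζ_q(-n, w, u | w₁)` to
the moments `Σ_m u^m [w₁m]_q^l`. Expanding `(1 - q^{w₁m})^l` turns each moment into a finite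
combination of geometric series with ratios `q^{w₁j} u`, which sum to `1/(1 - q^{w₁j} u)`. -/

theorem hasSum_pow_mul_one_sub_pow {𝕜 : Type*} [NormedField 𝕜] [CompleteSpace 𝕜] {b u : 𝕜}
    (hb : ‖b‖ ≤ 1) (hu : ‖u‖ < 1) (l : ℕ) :
    HasSum (fun m : ℕ => u ^ m * (1 - b ^ m) ^ l)
      (∑ j ∈ range (l + 1), (l.choose j : 𝕜) * (-1) ^ j / (1 - b ^ j * u)) := by
  have hexpand : ∀ m : ℕ, u ^ m * (1 - b ^ m) ^ l
      = ∑ j ∈ range (l + 1), (l.choose j : 𝕜) * (-1) ^ j * (b ^ j * u) ^ m := by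
    intro m
    rw [sub_eq_neg_add, add_pow, mul_sum]
    refine sum_congr rfl fun j _ => ?_
    rw [neg_pow, ← pow_mul, mul_comm m j, pow_mul]
    ring
  have hgeom : ∀ j : ℕ, ‖b ^ j * u‖ < 1 := fun j =>
    calc ‖b ^ j * u‖ = ‖b‖ ^ j * ‖u‖ := by rw [norm_mul, norm_pow]
      _ ≤ ‖u‖ := mul_le_of_le_one_left (norm_nonneg u) (pow_le_one₀ (norm_nonneg b) hb)
      _ < 1 := hu
  rw [funext hexpand]
  exact hasSum_sum fun j _ => by
    simpa only [div_eq_mul_inv] using (hasSum_geometric_of_norm_lt_one (hgeom j)).mul_left _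

theorem qn_add {q : ℝ} (hq : 0 < q) (a b : ℝ) : qn q (a + b) = qn q a + q ^ a * qn q b := by
  simp only [qn, Real.rpow_add hq]
  ring

theorem qn_add_pow {q : ℝ} (hq : 0 < q) (a b : ℝ) (n : ℕ) :
    qn q (a + b) ^ n
      = ∑ l ∈ range (n + 1), n.choose l * qn q a ^ (n - l) * q ^ (a * l) * qn q b ^ l := by
  rw [qn_add hq, add_comm, add_pow]
  refine sum_congr rfl fun l _ => ?_
  rw [Real.rpow_mul hq.le, Real.rpow_natCast]
  ring

theorem hasSum_qn_mul_pow {q : ℝ} (hq0 : 0 < q) (hq1 : q < 1) {w1 : ℝ} (hw1 : 0 ≤ w1)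
    {u : ℂ} (hu : ‖u‖ < 1) (l : ℕ) :
    HasSum (fun m : ℕ => u ^ m * ((qn q (w1 * m) ^ l : ℝ) : ℂ)) ((1 - u)⁻¹ * Hnum q w1 u l) := by
  have hu1 : (1 : ℂ) - u ≠ 0 := sub_ne_zero.2 (by rintro rfl; simp at hu)
  have hb : ‖((q ^ w1 : ℝ) : ℂ)‖ ≤ 1 := by
    rw [Complex.norm_real, Real.norm_of_nonneg (Real.rpow_nonneg hq0.le _)]
    exact Real.rpow_le_one hq0.le hq1.le hw1
  have hpow : ∀ k : ℕ, ((q ^ (w1 * k) : ℝ) : ℂ) = ((q ^ w1 : ℝ) : ℂ) ^ k := fun k => by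
    rw [Real.rpow_mul hq0.le, Real.rpow_natCast, Complex.ofReal_pow]
  have hterm : ∀ m : ℕ, u ^ m * ((qn q (w1 * m) ^ l : ℝ) : ℂ)
      = ((1 - q : ℝ) : ℂ)⁻¹ ^ l * (u ^ m * (1 - ((q ^ w1 : ℝ) : ℂ) ^ m) ^ l) := fun m => by
    rw [qn, div_pow, Complex.ofReal_div, Complex.ofReal_pow, Complex.ofReal_pow, Complex.ofReal_sub,
      Complex.ofReal_one, hpow, div_eq_mul_inv, inv_pow]
    ring
  rw [Hnum, ← mul_assoc, ← mul_assoc, inv_mul_cancel₀ hu1, one_mul, funext hterm]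
  simp only [hpow]
  exact (hasSum_pow_mul_one_sub_pow hb hu l).mul_left _

theorem daehee_qZeta_neg_int_general (q w w1 : ℝ) (hq0 : 0 < q) (hq1 : q < 1)
    (hw1 : 0 < w1) (u : ℂ) (hu : ‖u‖ < 1) (n : ℕ) :
    ∑' m : ℕ, u ^ m * ((qn q (w + w1 * (m : ℝ)) ^ n : ℝ) : ℂ)
      = (1 / (1 - u)) * Hpoly q w w1 u n := by
  have hterm : ∀ m : ℕ, u ^ m * ((qn q (w + w1 * (m : ℝ)) ^ n : ℝ) : ℂ)
      = ∑ l ∈ range (n + 1), (n.choose l : ℂ) * ((qn q w ^ (n - l) : ℝ) : ℂ)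
          * ((q ^ (w * (l : ℝ)) : ℝ) : ℂ) * (u ^ m * ((qn q (w1 * m) ^ l : ℝ) : ℂ)) := fun m => by
    rw [qn_add_pow hq0, Complex.ofReal_sum, mul_sum]
    refine sum_congr rfl fun l _ => ?_
    push_cast
    ring
  have hsum := hasSum_sum fun l (_ : l ∈ range (n + 1)) =>
    (hasSum_qn_mul_pow hq0 hq1 hw1.le hu l).mul_left
      ((n.choose l : ℂ) * ((qn q w ^ (n - l) : ℝ) : ℂ) * ((q ^ (w * (l : ℝ)) : ℝ) : ℂ))
  rw [funext hterm, hsum.tsum_eq, Hpoly, mul_sum]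
  refine sum_congr rfl fun l _ => ?_
  ring

/-- The Euler–Barnes type Daehee q-zeta function
`ζ_q(-n,w,u|w₁) = Σ_{m≥0} u^m·[w+w₁m]_q^n` interpolates the Euler–Barnes type Daehee
q-Euler polynomials: `ζ_q(-n,w,u|w₁) = (1/(1-u))·H_n(u⁻¹,w:q|w₁)`. -/
theorem daehee_qZeta_neg_int (q w w1 : ℝ) (hq0 : 0 < q) (hq1 : q < 1)
    (hw : 0 ≤ w) (hw1 : 0 < w1) (u : ℂ) (hu : ‖u‖ < 1) (hu1 : u ≠ 1) (n : ℕ) :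
    ∑' m : ℕ, u ^ m * ((qn q (w + w1 * (m : ℝ)) ^ n : ℝ) : ℂ)
      = (1 / (1 - u)) * Hpoly q w w1 u n :=
  daehee_qZeta_neg_int_general q w w1 hq0 hq1 hw1 u hu n
end
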